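/- arXiv:1206.4073 — 2 statements merged into one kernel-verified Lean document; each statement's English description precedes it below -/
import Mathlib

section
/- Let S be a metric space, (μ_n) Borel probability measures on S converging weakly to μ, and (f_n), (g_n) sequences of measurable functions on S with f_n(s) ≥ g_n(s) for all n and s, f_n extended-real-valued, g_n real-valued. Assume all relevant integrals are defined and −∞ < ∫_S limsup_{n→∞, s'→s} g_n(s') dμ(s) ≤ liminf_n ∫_S g_n dμ_n. Then ∫_S liminf_{n→∞, s'→s} f_n(s') dμ(s) ≤ liminf_n ∫_S f_n dμ_n. -/
open MeasureTheory Filter Topology ENNReal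

/-- The positive part of an extended real number, as an element of `ℝ≥0∞`. -/
noncomputable def eposPart (x : EReal) : ℝ≥0∞ :=
  if x = ⊤ then ⊤ else ENNReal.ofReal x.toReal

/-- The integral of an extended-real-valued function: `∫ f⁺ dμ − ∫ f⁻ dμ`. -/
noncomputable def eintegral {S : Type*} [MeasurableSpace S]
    (μ : MeasureTheory.Measure S) (f : S → EReal) : EReal :=
  ((∫⁻ s, eposPart (f s) ∂μ : ℝ≥0∞) : EReal) -
    ((∫⁻ s, eposPart (-f s) ∂μ : ℝ≥0∞) : EReal)

/-- The integral of an extended-real-valued function `f` is defined when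
`min(∫ f⁺ dμ, ∫ f⁻ dμ) < ∞`. -/
def EIntegralDefined {S : Type*} [MeasurableSpace S]
    (μ : MeasureTheory.Measure S) (f : S → EReal) : Prop :=
  (∫⁻ s, eposPart (f s) ∂μ) ≠ ⊤ ∨ (∫⁻ s, eposPart (-f s) ∂μ) ≠ ⊤

open NNReal Set

/-! Write `f n = g n + h n` with `h n = (f n - g n)⁺ ≥ 0`. At every point where the
joint upper limit `L` of the `g n` is not `⊥` (which holds a.e. since `∫ L dμ > -∞`), the joint
lower limit of the `f n` is at most `L + H`, where `H` is the joint lower limit of the `h n`; as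
`∫ L⁻ dμ < ∞` the integral of `L + H` splits as `∫ H dμ + ∫ L dμ`. For the nonnegative part, each
superlevel set `{H > c}` is covered by the increasing open sets on which `h n > c` for all large
`n`, so the open-set portmanteau inequality and the layer-cake formula give
`∫ H dμ ≤ liminf ∫ h n dμₙ`. Adding `∫ L dμ ≤ liminf ∫ g n dμₙ` and using
`∫ h n dμₙ + ∫ g n dμₙ ≤ ∫ f n dμₙ` finishes the proof. -/

-- The identity `(x + y)⁺ - (x + y)⁻ = y + x⁺ - x⁻`, with every term moved so that none is
-- subtracted.
lemma EReal.toENNReal_add_coe_ennreal (x : EReal) (y : ℝ≥0∞) :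
    (x + y).toENNReal + (-x).toENNReal = y + x.toENNReal + (-(x + y)).toENNReal := by
  induction x using EReal.rec with
  | bot => simp
  | top => simp [EReal.top_add_of_ne_bot (EReal.coe_ennreal_ne_bot y)]
  | coe r =>
    induction y with
    | top => simp
    | coe q =>
      rw [EReal.coe_nnreal_eq_coe_real, ← EReal.coe_add, ← EReal.coe_neg, ← EReal.coe_neg]
      simp only [EReal.real_coe_toENNReal]
      rw [← ENNReal.ofReal_coe_nnreal,
        ← ENNReal.toReal_eq_toReal_iff' (by finiteness) (by finiteness)]
      simp only [ENNReal.toReal_add, ENNReal.ofReal_ne_top, ENNReal.toReal_ofReal', max_def,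
        ne_eq, not_false_eq_true, ENNReal.add_ne_top, and_self]
      split_ifs <;> linarith [q.2]

lemma EReal.coe_ennreal_sub_eq_add_sub {a b c d e : ℝ≥0∞} (hb : b ≠ ⊤) (he : e ≠ ⊤)
    (h : a + b = c + d + e) : (a : EReal) - e = c + ((d : EReal) - b) := by
  lift b to ℝ≥0 using hb
  lift e to ℝ≥0 using he
  have h' : (a : EReal) + (b : ℝ) = c + d + (e : ℝ) := by
    simpa [← EReal.coe_nnreal_eq_coe_real] using congrArg ((↑) : ℝ≥0∞ → EReal) h
  rw [EReal.coe_nnreal_eq_coe_real, EReal.coe_nnreal_eq_coe_real]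
  calc (a : EReal) - (e : ℝ) = (a + (b : ℝ)) - (b : ℝ) - (e : ℝ) := by
        rw [EReal.add_sub_cancel_right]
    _ = (c + (d - (b : ℝ))) + (e : ℝ) - (e : ℝ) := by
        rw [h']; simp only [sub_eq_add_neg]; ac_rfl
    _ = c + ((d : EReal) - (b : ℝ)) := EReal.add_sub_cancel_right

lemma EReal.coe_add_toENNReal_sub {x : EReal} {r : ℝ} (h : (r : EReal) ≤ x) :
    (r : EReal) + (x - r).toENNReal = x := by
  rw [EReal.coe_toENNReal (EReal.sub_nonneg (.inr (EReal.coe_ne_top r))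
    (.inr (EReal.coe_ne_bot r)) |>.mpr h), add_comm, EReal.sub_add_cancel]

lemma EReal.coe_ennreal_liminf {α : Type*} {l : Filter α} [l.NeBot] (v : α → ℝ≥0∞) :
    ((liminf v l : ℝ≥0∞) : EReal) = liminf (fun a => (v a : EReal)) l :=
  Monotone.map_liminf_of_continuousAt (fun _ _ => EReal.coe_ennreal_le_coe_ennreal_iff.mpr) v
    continuous_coe_ennreal_ereal.continuousAt

lemma EReal.liminf_add_coe_ennreal_le {α : Type*} {l : Filter α} [l.NeBot] (u : α → EReal)
    (v : α → ℝ≥0∞) (hu : limsup u l ≠ ⊥) :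
    liminf (fun a => u a + v a) l ≤ limsup u l + liminf v l := by
  rw [EReal.coe_ennreal_liminf]
  refine EReal.liminf_add_le (Or.inl hu) (Or.inr (ne_bot_of_le_ne_bot EReal.zero_ne_bot ?_))
  exact le_liminf_of_le (by isBoundedDefault) (.of_forall fun a => EReal.coe_ennreal_nonneg (v a))

section Semicontinuity

variable {X ι β : Type*} [TopologicalSpace X] [CompleteLinearOrder β] [DenselyOrdered β]

lemma lowerSemicontinuous_liminf_prod_nhds (l : Filter ι) (u : ι × X → β) :
    LowerSemicontinuous fun x => liminf u (l ×ˢ 𝓝 x) := by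
  intro x t ht
  obtain ⟨t', ht1, ht2⟩ := exists_between ht
  obtain ⟨A, hA, B, hB, hAB⟩ := mem_prod_iff.mp (eventually_lt_of_lt_liminf ht2)
  filter_upwards [interior_mem_nhds.mpr hB] with y hy
  refine ht1.trans_le (le_liminf_of_le (by isBoundedDefault) ?_)
  filter_upwards [prod_mem_prod hA (isOpen_interior.mem_nhds hy)] with p hp
  exact (hAB ⟨hp.1, interior_subset hp.2⟩).le

lemma upperSemicontinuous_limsup_prod_nhds (l : Filter ι) (u : ι × X → β) :
    UpperSemicontinuous fun x => limsup u (l ×ˢ 𝓝 x) :=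
  lowerSemicontinuous_liminf_prod_nhds (β := βᵒᵈ) l u

end Semicontinuity

section EIntegral

variable {S : Type*} [MeasurableSpace S] {μ : Measure S}

lemma eposPart_eq_toENNReal : eposPart = EReal.toENNReal := rfl

lemma eintegral_mono_ae {f g : S → EReal} (hfg : f ≤ᵐ[μ] g) : eintegral μ f ≤ eintegral μ g := by
  have hpos : ∫⁻ s, (f s).toENNReal ∂μ ≤ ∫⁻ s, (g s).toENNReal ∂μ :=
    lintegral_mono_ae (hfg.mono fun s hs => EReal.toENNReal_le_toENNReal hs)
  have hneg : ∫⁻ s, (-g s).toENNReal ∂μ ≤ ∫⁻ s, (-f s).toENNReal ∂μ :=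
    lintegral_mono_ae (hfg.mono fun s hs =>
      EReal.toENNReal_le_toENNReal (EReal.neg_le_neg_iff.mpr hs))
  exact EReal.sub_le_sub (by exact_mod_cast hpos) (by exact_mod_cast hneg)

lemma lintegral_toENNReal_neg_ne_top_of_bot_lt_eintegral {f : S → EReal}
    (hf : ⊥ < eintegral μ f) : ∫⁻ s, (-f s).toENNReal ∂μ ≠ ⊤ := by
  intro htop
  simp [eintegral, eposPart_eq_toENNReal, htop] at hf

lemma ae_ne_bot_of_bot_lt_eintegral {f : S → EReal} (hf : AEMeasurable f μ)
    (hbot : ⊥ < eintegral μ f) : ∀ᵐ s ∂μ, f s ≠ ⊥ := by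
  filter_upwards [ae_lt_top' (by fun_prop)
    (lintegral_toENNReal_neg_ne_top_of_bot_lt_eintegral hbot)] with s hs
  simpa [EReal.toENNReal_ne_top_iff] using hs.ne

lemma eintegral_add_coe_ennreal {L : S → EReal} {h : S → ℝ≥0∞} (hL : Measurable L)
    (hh : Measurable h) (hL_neg : ∫⁻ s, (-L s).toENNReal ∂μ ≠ ⊤) :
    eintegral μ (fun s => L s + h s) = ∫⁻ s, h s ∂μ + eintegral μ L := by
  have hsum : ∫⁻ s, (L s + h s).toENNReal ∂μ + ∫⁻ s, (-L s).toENNReal ∂μ =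
      ∫⁻ s, h s ∂μ + ∫⁻ s, (L s).toENNReal ∂μ + ∫⁻ s, (-(L s + h s)).toENNReal ∂μ := by
    rw [← lintegral_add_left (by fun_prop), ← lintegral_add_left hh,
      ← lintegral_add_left (by fun_prop)]
    exact lintegral_congr fun s => EReal.toENNReal_add_coe_ennreal (L s) (h s)
  have hle : ∫⁻ s, (-(L s + h s)).toENNReal ∂μ ≤ ∫⁻ s, (-L s).toENNReal ∂μ :=
    lintegral_mono fun s => EReal.toENNReal_le_toENNReal <| EReal.neg_le_neg_iff.mpr <|
      le_add_of_nonneg_right (EReal.coe_ennreal_nonneg _)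
  exact EReal.coe_ennreal_sub_eq_add_sub hL_neg (ne_top_of_le_ne_top hL_neg hle) hsum

lemma lintegral_add_eintegral_le_eintegral_add {L : S → EReal} {h : S → ℝ≥0∞}
    (hL : Measurable L) (hh : Measurable h) :
    ∫⁻ s, h s ∂μ + eintegral μ L ≤ eintegral μ (fun s => L s + h s) := by
  by_cases hL_neg : ∫⁻ s, (-L s).toENNReal ∂μ = ⊤
  · simp [eintegral, eposPart_eq_toENNReal, hL_neg]
  · exact (eintegral_add_coe_ennreal hL hh hL_neg).ge

end EIntegral

lemma Real.volume_setOf_ofReal_lt_inter_Ioi (x : ℝ≥0∞) :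
    volume ({t : ℝ | ENNReal.ofReal t < x} ∩ Ioi 0) = x := by
  induction x with
  | top => simp
  | coe x =>
    have : {t : ℝ | ENNReal.ofReal t < x} ∩ Ioi 0 = Ioo 0 (x : ℝ) := by
      ext t
      rw [mem_inter_iff, mem_Ioo, and_comm]
      exact and_congr_right fun ht => ENNReal.ofReal_lt_iff_lt_toReal ht.le coe_ne_top
    simp [this]

lemma lintegral_eq_lintegral_meas_ofReal_lt {S : Type*} [MeasurableSpace S] (μ : Measure S)
    [SFinite μ] {H : S → ℝ≥0∞} (hH : Measurable H) :
    ∫⁻ s, H s ∂μ = ∫⁻ t in Ioi 0, μ {s | ENNReal.ofReal t < H s} := by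
  have hE : MeasurableSet {p : S × ℝ | ENNReal.ofReal p.2 < H p.1} :=
    measurableSet_lt (by fun_prop) (hH.comp measurable_fst)
  calc ∫⁻ s, H s ∂μ
      = ∫⁻ s, volume.restrict (Ioi 0) (Prod.mk s ⁻¹' {p | ENNReal.ofReal p.2 < H p.1}) ∂μ := by
        refine lintegral_congr fun s => ?_
        rw [Measure.restrict_apply (measurable_prodMk_left hE)]
        exact (Real.volume_setOf_ofReal_lt_inter_Ioi (H s)).symm
    _ = (μ.prod (volume.restrict (Ioi 0))) {p | ENNReal.ofReal p.2 < H p.1} :=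
        (Measure.prod_apply hE).symm
    _ = ∫⁻ t in Ioi 0, μ {s | ENNReal.ofReal t < H s} := Measure.prod_apply_symm hE

section WeakConvergence

variable {S : Type*} [TopologicalSpace S] [MeasurableSpace S] {μs : ℕ → Measure S}
  {μ : Measure S}

lemma measure_lt_liminf_prod_nhds_le_liminf_measure
    (hopen : ∀ G : Set S, IsOpen G → μ G ≤ liminf (fun n => μs n G) atTop)
    (h : ℕ → S → ℝ≥0∞) (c : ℝ≥0∞) :
    μ {s | c < liminf (fun p : ℕ × S => h p.1 p.2) (atTop ×ˢ 𝓝 s)} ≤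
      liminf (fun n => μs n {s | c < h n s}) atTop := by
  set O : ℕ → Set S := fun N => interior {s | ∀ n, N ≤ n → c < h n s}
  have hO_mono : Monotone O := fun N M hNM =>
    interior_mono fun s hs n hn => hs n (hNM.trans hn)
  have hsub : {s | c < liminf (fun p : ℕ × S => h p.1 p.2) (atTop ×ˢ 𝓝 s)} ⊆ ⋃ N, O N := by
    intro s (hs : c < liminf _ _)
    obtain ⟨A, hA, B, hB, hAB⟩ := mem_prod_iff.mp (eventually_lt_of_lt_liminf hs)
    obtain ⟨N, hN⟩ := mem_atTop_sets.mp hA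
    refine mem_iUnion.mpr ⟨N, mem_interior_iff_mem_nhds.mpr ?_⟩
    exact mem_of_superset hB fun s' hs' n hn => hAB (mk_mem_prod (hN n hn) hs')
  calc μ {s | c < liminf (fun p : ℕ × S => h p.1 p.2) (atTop ×ˢ 𝓝 s)}
      ≤ ⨆ N, μ (O N) := (measure_mono hsub).trans_eq hO_mono.measure_iUnion
    _ ≤ liminf (fun n => μs n {s | c < h n s}) atTop := by
        refine iSup_le fun N => (hopen (O N) isOpen_interior).trans (liminf_le_liminf ?_)
        filter_upwards [eventually_ge_atTop N] with n hn
        exact measure_mono fun s hs => interior_subset hs n hn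

lemma lintegral_liminf_prod_nhds_le_liminf_lintegral [OpensMeasurableSpace S] [SFinite μ]
    [∀ n, SFinite (μs n)] (hopen : ∀ G : Set S, IsOpen G → μ G ≤ liminf (fun n => μs n G) atTop)
    {h : ℕ → S → ℝ≥0∞} (hh : ∀ n, Measurable (h n)) :
    ∫⁻ s, liminf (fun p : ℕ × S => h p.1 p.2) (atTop ×ˢ 𝓝 s) ∂μ ≤
      liminf (fun n => ∫⁻ s, h n s ∂μs n) atTop := by
  rw [lintegral_eq_lintegral_meas_ofReal_lt μ
    (lowerSemicontinuous_liminf_prod_nhds _ _).measurable]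
  simp_rw [lintegral_eq_lintegral_meas_ofReal_lt _ (hh _)]
  refine (lintegral_mono fun t =>
    measure_lt_liminf_prod_nhds_le_liminf_measure hopen h _).trans ?_
  refine lintegral_liminf_le fun n => Antitone.measurable fun t t' htt' => ?_
  exact measure_mono fun s hs => (ENNReal.ofReal_le_ofReal htt').trans_lt hs

lemma le_liminf_measure_of_isOpen_of_forall_tendsto_integral [OpensMeasurableSpace S]
    [HasOuterApproxClosed S] [∀ n, IsProbabilityMeasure (μs n)] [IsProbabilityMeasure μ]
    (hweak : ∀ h : S → ℝ, Continuous h → (∃ C : ℝ, ∀ s, |h s| ≤ C) →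
      Tendsto (fun n => ∫ s, h s ∂(μs n)) atTop (𝓝 (∫ s, h s ∂μ)))
    {G : Set S} (hG : IsOpen G) : μ G ≤ liminf (fun n => μs n G) atTop := by
  let P : ℕ → ProbabilityMeasure S := fun n => ⟨μs n, inferInstance⟩
  let Q : ProbabilityMeasure S := ⟨μ, inferInstance⟩
  have hPQ : Tendsto P atTop (𝓝 Q) := by
    refine ProbabilityMeasure.tendsto_iff_forall_integral_tendsto.mpr fun φ => ?_
    exact hweak φ φ.continuous ⟨‖φ‖, fun s => (Real.norm_eq_abs _).symm ▸ φ.norm_coe_le_norm s⟩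
  exact ProbabilityMeasure.le_liminf_measure_open_of_tendsto hPQ hG

end WeakConvergence

theorem fatou_weak_convergence_unbounded_below_general
    {S : Type*} [MetricSpace S] [MeasurableSpace S] [BorelSpace S]
    (μs : ℕ → Measure S) (μ : Measure S)
    [∀ n, IsProbabilityMeasure (μs n)] [IsProbabilityMeasure μ]
    (hweak : ∀ h : S → ℝ, Continuous h → (∃ C : ℝ, ∀ s, |h s| ≤ C) →
      Tendsto (fun n => ∫ s, h s ∂(μs n)) atTop (𝓝 (∫ s, h s ∂μ)))
    (f : ℕ → S → EReal) (hf : ∀ n, Measurable (f n))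
    (g : ℕ → S → ℝ) (hg : ∀ n, Measurable (g n))
    (hfg : ∀ n s, (g n s : EReal) ≤ f n s)
    (hbound : ⊥ < eintegral μ
      (fun s => limsup (fun p : ℕ × S => (g p.1 p.2 : EReal)) (atTop ×ˢ 𝓝 s)))
    (hle : eintegral μ
        (fun s => limsup (fun p : ℕ × S => (g p.1 p.2 : EReal)) (atTop ×ˢ 𝓝 s)) ≤
      liminf (fun n => eintegral (μs n) (fun s => (g n s : EReal))) atTop) :
    eintegral μ (fun s => liminf (fun p : ℕ × S => f p.1 p.2) (atTop ×ˢ 𝓝 s)) ≤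
      liminf (fun n => eintegral (μs n) (f n)) atTop := by
  set h : ℕ → S → ℝ≥0∞ := fun n s => (f n s - g n s).toENNReal
  have hf_eq : ∀ n s, f n s = g n s + h n s := fun n s =>
    (EReal.coe_add_toENNReal_sub (hfg n s)).symm
  have hh : ∀ n, Measurable (h n) := fun n =>
    EReal.continuous_toENNReal.measurable.comp ((hf n).sub (hg n).coe_real_ereal)
  set L := fun s => limsup (fun p : ℕ × S => (g p.1 p.2 : EReal)) (atTop ×ˢ 𝓝 s)
  set H := fun s => liminf (fun p : ℕ × S => h p.1 p.2) (atTop ×ˢ 𝓝 s)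
  have hL : Measurable L := (upperSemicontinuous_limsup_prod_nhds _ _).measurable
  have hF_le : (fun s => liminf (fun p : ℕ × S => f p.1 p.2) (atTop ×ˢ 𝓝 s)) ≤ᵐ[μ]
      fun s => L s + H s := by
    filter_upwards [ae_ne_bot_of_bot_lt_eintegral hL.aemeasurable hbound] with s hs
    simp_rw [hf_eq]
    exact EReal.liminf_add_coe_ennreal_le _ _ hs
  have hH_le : ∫⁻ s, H s ∂μ ≤ liminf (fun n => ∫⁻ s, h n s ∂μs n) atTop :=
    lintegral_liminf_prod_nhds_le_liminf_lintegral
      (fun G hG => le_liminf_measure_of_isOpen_of_forall_tendsto_integral hweak hG) hh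
  calc _ ≤ eintegral μ (fun s => L s + H s) := eintegral_mono_ae hF_le
    _ = ∫⁻ s, H s ∂μ + eintegral μ L :=
        eintegral_add_coe_ennreal hL (lowerSemicontinuous_liminf_prod_nhds _ _).measurable
          (lintegral_toENNReal_neg_ne_top_of_bot_lt_eintegral hbound)
    _ ≤ liminf (fun n => ((∫⁻ s, h n s ∂μs n : ℝ≥0∞) : EReal)) atTop +
          liminf (fun n => eintegral (μs n) (fun s => (g n s : EReal))) atTop := by
        rw [← EReal.coe_ennreal_liminf]
        gcongr
        exact EReal.coe_ennreal_le_coe_ennreal_iff.mpr hH_le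
    _ ≤ liminf (fun n => (∫⁻ s, h n s ∂μs n : ℝ≥0∞) +
          eintegral (μs n) (fun s => (g n s : EReal))) atTop := EReal.le_liminf_add
    _ ≤ _ := liminf_le_liminf <| Eventually.of_forall fun n =>
        (lintegral_add_eintegral_le_eintegral_add (hg n).coe_real_ereal (hh n)).trans_eq
          (congrArg _ (funext (hf_eq n)).symm)

/-- Fatou's lemma for weakly converging probability measures and functions
unbounded below (Theorem 3): if `f_n ≥ g_n` and the joint upper limit of the
`g_n` satisfies the integral condition, then the integral of the joint lower
limit of the `f_n` is at most the lower limit of the integrals `∫ f_n dμ_n`. -/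
theorem fatou_weak_convergence_unbounded_below
    {S : Type*} [MetricSpace S] [MeasurableSpace S] [BorelSpace S]
    (μs : ℕ → Measure S) (μ : Measure S)
    [∀ n, IsProbabilityMeasure (μs n)] [IsProbabilityMeasure μ]
    (hweak : ∀ h : S → ℝ, Continuous h → (∃ C : ℝ, ∀ s, |h s| ≤ C) →
      Tendsto (fun n => ∫ s, h s ∂(μs n)) atTop (𝓝 (∫ s, h s ∂μ)))
    (f : ℕ → S → EReal) (hf : ∀ n, Measurable (f n))
    (g : ℕ → S → ℝ) (hg : ∀ n, Measurable (g n))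
    (hfg : ∀ n s, (g n s : EReal) ≤ f n s)
    (hdf : ∀ n, EIntegralDefined (μs n) (f n))
    (hdliminf : EIntegralDefined μ
      (fun s => liminf (fun p : ℕ × S => f p.1 p.2) (atTop ×ˢ 𝓝 s)))
    (hdg : ∀ n, EIntegralDefined (μs n) (fun s => (g n s : EReal)))
    (hdlimsupg : EIntegralDefined μ
      (fun s => limsup (fun p : ℕ × S => (g p.1 p.2 : EReal)) (atTop ×ˢ 𝓝 s)))
    (hbound : ⊥ < eintegral μ
      (fun s => limsup (fun p : ℕ × S => (g p.1 p.2 : EReal)) (atTop ×ˢ 𝓝 s)))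
    (hle : eintegral μ
        (fun s => limsup (fun p : ℕ × S => (g p.1 p.2 : EReal)) (atTop ×ˢ 𝓝 s)) ≤
      liminf (fun n => eintegral (μs n) (fun s => (g n s : EReal))) atTop) :
    eintegral μ (fun s => liminf (fun p : ℕ × S => f p.1 p.2) (atTop ×ˢ 𝓝 s)) ≤
      liminf (fun n => eintegral (μs n) (f n)) atTop :=
  fatou_weak_convergence_unbounded_below_general μs μ hweak f hf g hg hfg hbound hle
end

section
/- Let S be a metric space, (μ_n) Borel probability measures on S converging weakly to μ, (f_n) measurable extended-real-valued functions on S, and g : S → ℝ a bounded above upper semicontinuous function with f_n ≥ g pointwise for all n and −∞ < ∫_S g dμ = lim_{n→∞} ∫_S g dμ_n. Then ∫_S liminf_{n→∞, s'→s} f_n(s') dμ(s) ≤ liminf_{n→∞} ∫_S f_n dμ_n. -/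
open MeasureTheory Filter Topology ENNReal

/-!
Write `f n = g + H n` with `H n = (f n - g)⁺ ≥ 0`. Upper semicontinuity of `g` gives
`liminf f ≤ Ψ + g` pointwise, where `Ψ` is the joint lower limit of the `H n`; since
`∫ g dμ > -∞` is the limit of the `∫ g dμₙ`, the `g`-parts split off on both sides and match in
the limit. What remains is Fatou's lemma for the nonnegative `H n` under weak convergence: `Ψ` is
the increasing limit of the bounded Lipschitz functions `tailLipMinorant H k`, which lie below
`H n` for `n ≥ k`, so monotone and weak convergence give
`∫ Ψ dμ = ⨆ k, lim n, ∫ tailLipMinorant H k dμₙ ≤ liminf n, ∫ H n dμₙ`.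
-/

open scoped NNReal BoundedContinuousFunction

lemma eposPart_coe (r : ℝ) : eposPart (r : EReal) = ENNReal.ofReal r := by
  simp [eposPart]

lemma eposPart_neg_coe (r : ℝ) : eposPart (-(r : EReal)) = ENNReal.ofReal (-r) := by
  rw [← EReal.coe_neg, eposPart_coe]

lemma eposPart_coe_ennreal (x : ℝ≥0∞) : eposPart (x : EReal) = x := by
  rcases eq_or_ne x ⊤ with rfl | hx
  · simp [eposPart]
  · lift x to NNReal using hx
    simp [eposPart]

lemma eposPart_mono : Monotone eposPart := by
  intro x y hxy
  rcases eq_or_ne y ⊤ with rfl | hy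
  · simp [eposPart]
  have hx : x ≠ ⊤ := ne_top_of_le_ne_top hy hxy
  rcases eq_or_ne x ⊥ with rfl | hx'
  · simp [eposPart]
  rw [eposPart, if_neg hx, eposPart, if_neg hy]
  exact ENNReal.ofReal_le_ofReal (EReal.toReal_le_toReal hxy hx' hy)

lemma coe_add_eposPart_sub {x : EReal} {r : ℝ} (h : (r : EReal) ≤ x) :
    (r : EReal) + eposPart (x - r) = x := by
  induction x with
  | bot => simp at h
  | coe a =>
    rw [← EReal.coe_sub, eposPart_coe, EReal.coe_ennreal_ofReal,
      max_eq_left (sub_nonneg.2 (EReal.coe_le_coe_iff.1 h)), ← EReal.coe_add, add_sub_cancel]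
  | top => simp [eposPart]

lemma eposPart_add_ofReal_neg {x : EReal} {r : ℝ} (h : (r : EReal) ≤ x) :
    eposPart x + ENNReal.ofReal (-r) = eposPart (x - r) + ENNReal.ofReal r + eposPart (-x) := by
  induction x with
  | bot => simp at h
  | coe a =>
    have hra : r ≤ a := EReal.coe_le_coe_iff.1 h
    rw [← EReal.coe_sub, ← EReal.coe_neg, eposPart_coe, eposPart_coe, eposPart_coe,
      ← ENNReal.toReal_eq_toReal_iff' (by finiteness) (by finiteness)]
    simp only [ENNReal.toReal_add ENNReal.ofReal_ne_top ENNReal.ofReal_ne_top,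
      ENNReal.toReal_add (ENNReal.add_ne_top.2 ⟨ENNReal.ofReal_ne_top, ENNReal.ofReal_ne_top⟩)
        ENNReal.ofReal_ne_top, ENNReal.toReal_ofReal', max_def]
    split_ifs <;> linarith
  | top => simp [eposPart]

lemma EReal.sub_le_sub_of_add_le {x y : EReal} {a b : ℝ} (h : x + b ≤ y + a) :
    x - a ≤ y - b := by
  rw [EReal.le_sub_iff_add_le (by simp) (by simp), sub_eq_add_neg, add_right_comm,
    ← sub_eq_add_neg, EReal.sub_le_iff_le_add (by simp) (by simp)]
  exact h

lemma EReal.coe_ennreal_sub_le_coe_ennreal_sub {a b c d : ℝ≥0∞} (hb : b ≠ ⊤) (hd : d ≠ ⊤)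
    (h : a + d ≤ c + b) : (a : EReal) - b ≤ c - d := by
  rw [← EReal.coe_ennreal_toReal hb, ← EReal.coe_ennreal_toReal hd]
  apply EReal.sub_le_sub_of_add_le
  rw [EReal.coe_ennreal_toReal hb, EReal.coe_ennreal_toReal hd, ← EReal.coe_ennreal_add,
    ← EReal.coe_ennreal_add]
  exact EReal.coe_ennreal_le_coe_ennreal_iff.2 h

section EIntegral

variable {S : Type*} [MeasurableSpace S] {ν : Measure S} {g : S → ℝ}

lemma eintegral_mono {f₁ f₂ : S → EReal} (h : ∀ s, f₁ s ≤ f₂ s) :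
    eintegral ν f₁ ≤ eintegral ν f₂ :=
  EReal.sub_le_sub
    (EReal.coe_ennreal_le_coe_ennreal_iff.2 (lintegral_mono fun s => eposPart_mono (h s)))
    (EReal.coe_ennreal_le_coe_ennreal_iff.2
      (lintegral_mono fun s => eposPart_mono (EReal.neg_le_neg_iff.2 (h s))))

lemma lintegral_ofReal_neg_ne_top_of_eintegral_ne_bot
    (h : eintegral ν (fun s => (g s : EReal)) ≠ ⊥) : ∫⁻ s, ENNReal.ofReal (-g s) ∂ν ≠ ⊤ := by
  intro htop
  simp only [eintegral, eposPart_neg_coe, htop, EReal.coe_ennreal_top, EReal.sub_top] at h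
  exact h rfl

lemma lintegral_eposPart_neg_le {f : S → EReal} (hfg : ∀ s, (g s : EReal) ≤ f s) :
    ∫⁻ s, eposPart (-f s) ∂ν ≤ ∫⁻ s, ENNReal.ofReal (-g s) ∂ν :=
  lintegral_mono fun s => eposPart_neg_coe (g s) ▸ eposPart_mono (EReal.neg_le_neg_iff.2 (hfg s))

lemma coe_lintegral_eposPart_sub_add_eintegral_le {f : S → EReal} (hg : Measurable g)
    (hgn : ∫⁻ s, ENNReal.ofReal (-g s) ∂ν ≠ ⊤) (hfg : ∀ s, (g s : EReal) ≤ f s) :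
    ((∫⁻ s, eposPart (f s - g s) ∂ν : ℝ≥0∞) : EReal) + eintegral ν (fun s => (g s : EReal)) ≤
      eintegral ν f := by
  have hsum : (∫⁻ s, eposPart (f s - g s) ∂ν) + (∫⁻ s, ENNReal.ofReal (g s) ∂ν) +
      ∫⁻ s, eposPart (-f s) ∂ν ≤ (∫⁻ s, eposPart (f s) ∂ν) + ∫⁻ s, ENNReal.ofReal (-g s) ∂ν :=
    calc _ ≤ ∫⁻ s, eposPart (f s - g s) + ENNReal.ofReal (g s) + eposPart (-f s) ∂ν :=
          (add_le_add (le_lintegral_add _ _) le_rfl).trans (le_lintegral_add _ _)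
      _ = ∫⁻ s, eposPart (f s) + ENNReal.ofReal (-g s) ∂ν :=
          lintegral_congr fun s => (eposPart_add_ofReal_neg (hfg s)).symm
      _ = _ := lintegral_add_right _ hg.neg.ennreal_ofReal
  simp only [eintegral, eposPart_coe, eposPart_neg_coe]
  rw [← add_sub_assoc, ← EReal.coe_ennreal_add]
  exact EReal.coe_ennreal_sub_le_coe_ennreal_sub hgn
    (ne_top_of_le_ne_top hgn (lintegral_eposPart_neg_le hfg)) hsum

lemma eintegral_coe_ennreal_add_le {ψ : S → ℝ≥0∞} (hψ : Measurable ψ) (hg : Measurable g)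
    (hgn : ∫⁻ s, ENNReal.ofReal (-g s) ∂ν ≠ ⊤) :
    eintegral ν (fun s => (ψ s : EReal) + g s) ≤
      ((∫⁻ s, ψ s ∂ν : ℝ≥0∞) : EReal) + eintegral ν (fun s => (g s : EReal)) := by
  have hfg : ∀ s, (g s : EReal) ≤ ψ s + g s := fun s =>
    le_add_of_nonneg_left (EReal.coe_ennreal_nonneg _)
  have hsum : (∫⁻ s, eposPart (ψ s + g s) ∂ν) + ∫⁻ s, ENNReal.ofReal (-g s) ∂ν =
      (∫⁻ s, ψ s ∂ν) + (∫⁻ s, ENNReal.ofReal (g s) ∂ν) + ∫⁻ s, eposPart (-(ψ s + g s)) ∂ν :=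
    calc _ = ∫⁻ s, eposPart (ψ s + g s) + ENNReal.ofReal (-g s) ∂ν :=
          (lintegral_add_right _ hg.neg.ennreal_ofReal).symm
      _ = ∫⁻ s, ψ s + ENNReal.ofReal (g s) + eposPart (-(ψ s + g s)) ∂ν :=
          lintegral_congr fun s => by
            rw [eposPart_add_ofReal_neg (hfg s), EReal.add_sub_cancel_right, eposPart_coe_ennreal]
      _ = _ := by rw [lintegral_add_left (f := fun s => ψ s + ENNReal.ofReal (g s))
            (hψ.add hg.ennreal_ofReal), lintegral_add_left hψ]
  simp only [eintegral, eposPart_coe, eposPart_neg_coe]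
  rw [← add_sub_assoc, ← EReal.coe_ennreal_add]
  exact EReal.coe_ennreal_sub_le_coe_ennreal_sub
    (ne_top_of_le_ne_top hgn (lintegral_eposPart_neg_le hfg)) hgn hsum.le

end EIntegral

lemma EReal.liminf_coe_ennreal {ι : Type*} {l : Filter ι} [l.NeBot] (a : ι → ℝ≥0∞) :
    liminf (fun i => (a i : EReal)) l = ((liminf a l : ℝ≥0∞) : EReal) :=
  (Monotone.map_liminf_of_continuousAt (F := l)
    (fun _ _ h => EReal.coe_ennreal_le_coe_ennreal_iff.2 h) a
    continuous_coe_ennreal_ereal.continuousAt).symm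

lemma UpperSemicontinuous.liminf_coe_add_le {ι S : Type*} [TopologicalSpace S] {l : Filter ι}
    [l.NeBot] {g : S → ℝ} (hg : UpperSemicontinuous g) (H : ι × S → ℝ≥0∞) (s : S) :
    liminf (fun p => (g p.2 : EReal) + H p) (l ×ˢ 𝓝 s) ≤
      ((liminf H (l ×ˢ 𝓝 s) : ℝ≥0∞) : EReal) + g s := by
  have hlimsup : limsup (fun p : ι × S => (g p.2 : EReal)) (l ×ˢ 𝓝 s) ≤ g s := by
    rw [← Function.comp_def (fun x : S => (g x : EReal)) Prod.snd, limsup_comp, map_snd_prod]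
    exact (continuous_coe_real_ereal.comp_upperSemicontinuous hg
      EReal.coe_strictMono.monotone).limsup_le s
  rcases eq_or_ne (liminf H (l ×ˢ 𝓝 s)) ⊤ with htop | htop
  · simp [htop]
  rw [add_comm, ← EReal.liminf_coe_ennreal]
  refine (EReal.liminf_add_le ?_ ?_).trans (add_le_add hlimsup le_rfl) <;>
    rw [EReal.liminf_coe_ennreal]
  · exact Or.inr (by simpa using htop)
  · exact Or.inr (EReal.coe_ennreal_ne_bot _)

lemma EReal.coe_liminf_add_le_liminf {ι : Type*} {l : Filter ι} [l.NeBot] {a : ι → ℝ≥0∞}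
    {b c : ι → EReal} {β : EReal} (hb : Tendsto b l (𝓝 β))
    (h : ∀ᶠ i in l, (a i : EReal) + b i ≤ c i) :
    ((liminf a l : ℝ≥0∞) : EReal) + β ≤ liminf c l := by
  rw [← EReal.liminf_coe_ennreal, ← hb.liminf_eq]
  exact EReal.le_liminf_add.trans (liminf_le_liminf h)

section TailLipMinorant

variable {S : Type*} [PseudoEMetricSpace S] (H : ℕ → S → ℝ≥0∞)

-- The Pasch–Hausdorff envelope of the truncated tail `min (H m) k`, `m ≥ k`.
noncomputable def tailLipMinorant (k : ℕ) (s : S) : ℝ≥0∞ :=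
  ⨅ m ≥ k, ⨅ t, min (H m t) k + k * edist s t

variable {H}

lemma tailLipMinorant_le_min {k m : ℕ} (hkm : k ≤ m) (s t : S) :
    tailLipMinorant H k s ≤ min (H m t) k + k * edist s t :=
  (iInf₂_le m hkm).trans (iInf_le _ t)

lemma tailLipMinorant_le {k n : ℕ} (hkn : k ≤ n) (s : S) : tailLipMinorant H k s ≤ H n s :=
  (tailLipMinorant_le_min hkn s s).trans (by simp)

lemma tailLipMinorant_le_natCast (k : ℕ) (s : S) : tailLipMinorant H k s ≤ k :=
  (tailLipMinorant_le_min le_rfl s s).trans (by simp)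

lemma tailLipMinorant_le_add_edist (k : ℕ) (s t : S) :
    tailLipMinorant H k s ≤ tailLipMinorant H k t + k * edist s t :=
  calc tailLipMinorant H k s
      ≤ ⨅ m ≥ k, ⨅ u, min (H m u) k + k * edist t u + k * edist s t :=
        le_iInf₂ fun m hm => le_iInf fun u => (tailLipMinorant_le_min hm s u).trans <| by
          rw [add_assoc, ← mul_add, add_comm (edist t u)]
          gcongr
          exact edist_triangle s t u
    _ = tailLipMinorant H k t + k * edist s t := by simp only [tailLipMinorant, ENNReal.iInf_add]

lemma continuous_tailLipMinorant (k : ℕ) : Continuous (tailLipMinorant H k) :=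
  continuous_of_le_add_edist k (ENNReal.natCast_ne_top k)
    (tailLipMinorant_le_add_edist k)

lemma tailLipMinorant_mono {k l : ℕ} (hkl : k ≤ l) (s : S) :
    tailLipMinorant H k s ≤ tailLipMinorant H l s :=
  le_iInf₂ fun m hm => le_iInf fun t => (tailLipMinorant_le_min (hkl.trans hm) s t).trans <| by
    gcongr

lemma tailLipMinorant_le_liminf (k : ℕ) (s : S) :
    tailLipMinorant H k s ≤ liminf (fun p : ℕ × S => H p.1 p.2) (atTop ×ˢ 𝓝 s) := by
  have hlim : Tendsto (fun p : ℕ × S => tailLipMinorant H k p.2) (atTop ×ˢ 𝓝 s)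
      (𝓝 (tailLipMinorant H k s)) :=
    ((continuous_tailLipMinorant k).tendsto s).comp tendsto_snd
  rw [← hlim.liminf_eq]
  exact liminf_le_liminf (((eventually_ge_atTop k).prod_inl _).mono fun p hp =>
    tailLipMinorant_le hp p.2)

lemma liminf_le_iSup_tailLipMinorant (s : S) :
    liminf (fun p : ℕ × S => H p.1 p.2) (atTop ×ˢ 𝓝 s) ≤ ⨆ k, tailLipMinorant H k s := by
  refine ENNReal.le_of_forall_nnreal_lt fun c hc => ?_
  obtain ⟨⟨n₀, ε⟩, ⟨-, hε⟩, hH⟩ := (atTop_basis.prod Metric.nhds_basis_eball).eventually_iff.1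
    (eventually_lt_of_lt_liminf hc)
  obtain ⟨k₁, hk₁⟩ := ENNReal.exists_nat_mul_gt hε.ne' ENNReal.coe_ne_top
  obtain ⟨k₂, hk₂⟩ := exists_nat_ge c
  refine le_iSup_of_le (n₀ + k₁ + k₂) <| le_iInf₂ fun m hm => le_iInf fun t => ?_
  -- Near `s` the truncated `H m` exceeds `c`; away from `s` the penalty `k * edist s t` does.
  by_cases ht : edist t s < ε
  · refine le_add_right (le_min (hH (x := (m, t)) ⟨?_, ht⟩).le ?_)
    · simp only [Set.mem_Ici]; omega
    · exact_mod_cast hk₂.trans (by simp only [Nat.cast_le]; omega)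
  · refine le_add_left (hk₁.le.trans ?_)
    rw [edist_comm] at ht
    gcongr
    · exact_mod_cast (by omega : k₁ ≤ n₀ + k₁ + k₂)
    · exact not_lt.1 ht

lemma iSup_tailLipMinorant (s : S) :
    ⨆ k, tailLipMinorant H k s = liminf (fun p : ℕ × S => H p.1 p.2) (atTop ×ˢ 𝓝 s) :=
  le_antisymm (iSup_le fun k => tailLipMinorant_le_liminf k s) (liminf_le_iSup_tailLipMinorant s)

end TailLipMinorant

lemma measurable_liminf_prod_nhds {S : Type*} [PseudoEMetricSpace S] [MeasurableSpace S]
    [OpensMeasurableSpace S] (H : ℕ → S → ℝ≥0∞) :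
    Measurable fun s => liminf (fun p : ℕ × S => H p.1 p.2) (atTop ×ˢ 𝓝 s) := by
  simp_rw [← iSup_tailLipMinorant]
  exact .iSup fun k => (continuous_tailLipMinorant k).measurable

namespace MeasureTheory.FiniteMeasure

variable {S : Type*} [MeasurableSpace S]

lemma tendsto_lintegral_of_continuous_of_le [TopologicalSpace S] [OpensMeasurableSpace S]
    {ι : Type*} {l : Filter ι} {μs : ι → FiniteMeasure S} {μ : FiniteMeasure S}
    (hμ : Tendsto μs l (𝓝 μ)) {u : S → ℝ≥0∞} (hu : Continuous u) {C : ℝ≥0}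
    (huC : ∀ s, u s ≤ C) :
    Tendsto (fun i => ∫⁻ s, u s ∂(μs i : Measure S)) l (𝓝 (∫⁻ s, u s ∂(μ : Measure S))) := by
  have hne : ∀ s, u s ≠ ⊤ := fun s => ne_top_of_le_ne_top ENNReal.coe_ne_top (huC s)
  have huC' : ∀ s, (u s).toNNReal ≤ C := fun s =>
    (ENNReal.toNNReal_le_toNNReal (hne s) ENNReal.coe_ne_top).2 (huC s)
  let v : S →ᵇ ℝ≥0 := .mkOfBound
    ⟨fun s => (u s).toNNReal, ENNReal.continuousOn_toNNReal.comp_continuous hu hne⟩ C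
    fun s t => by
      rw [NNReal.dist_eq]
      exact abs_sub_le_of_nonneg_of_le (by positivity) (huC' s) (by positivity) (huC' t)
  simpa [v, ENNReal.coe_toNNReal (hne _)] using tendsto_iff_forall_lintegral_tendsto.1 hμ v

theorem lintegral_liminf_le_liminf_lintegral [PseudoEMetricSpace S] [OpensMeasurableSpace S]
    {μs : ℕ → FiniteMeasure S} {μ : FiniteMeasure S} (hμ : Tendsto μs atTop (𝓝 μ))
    (H : ℕ → S → ℝ≥0∞) :
    ∫⁻ s, liminf (fun p : ℕ × S => H p.1 p.2) (atTop ×ˢ 𝓝 s) ∂(μ : Measure S) ≤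
      liminf (fun n => ∫⁻ s, H n s ∂(μs n : Measure S)) atTop := by
  simp_rw [← iSup_tailLipMinorant]
  rw [lintegral_iSup (fun k => (continuous_tailLipMinorant k).measurable)
    fun k l hkl s => tailLipMinorant_mono hkl s]
  refine iSup_le fun k => ?_
  rw [← (tendsto_lintegral_of_continuous_of_le hμ (continuous_tailLipMinorant k)
    (tailLipMinorant_le_natCast (H := H) k)).liminf_eq]
  exact liminf_le_liminf ((eventually_ge_atTop k).mono fun n hn =>
    lintegral_mono fun s => tailLipMinorant_le hn s)

end MeasureTheory.FiniteMeasure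

theorem fatou_weak_convergence_usc_minorant_general
    {S : Type*} [MetricSpace S] [MeasurableSpace S] [BorelSpace S]
    (μs : ℕ → Measure S) (μ : Measure S)
    [∀ n, IsProbabilityMeasure (μs n)] [IsProbabilityMeasure μ]
    (hweak : ∀ h : S → ℝ, Continuous h → (∃ C : ℝ, ∀ s, |h s| ≤ C) →
      Tendsto (fun n => ∫ s, h s ∂(μs n)) atTop (𝓝 (∫ s, h s ∂μ)))
    (f : ℕ → S → EReal)
    (g : S → ℝ) (hgusc : UpperSemicontinuous g)
    (hfg : ∀ n s, (g s : EReal) ≤ f n s)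
    (hbound : ⊥ < eintegral μ (fun s => (g s : EReal)))
    (hlim : Tendsto (fun n => eintegral (μs n) (fun s => (g s : EReal))) atTop
      (𝓝 (eintegral μ (fun s => (g s : EReal))))) :
    eintegral μ (fun s => liminf (fun p : ℕ × S => f p.1 p.2) (atTop ×ˢ 𝓝 s)) ≤
      liminf (fun n => eintegral (μs n) (f n)) atTop := by
  set H : ℕ → S → ℝ≥0∞ := fun n s => eposPart (f n s - g s)
  have hμ : Tendsto (fun n => ProbabilityMeasure.toFiniteMeasure ⟨μs n, inferInstance⟩) atTop
      (𝓝 (ProbabilityMeasure.toFiniteMeasure ⟨μ, inferInstance⟩)) :=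
    (ProbabilityMeasure.tendsto_nhds_iff_toFiniteMeasure_tendsto_nhds _).1 <|
      ProbabilityMeasure.tendsto_iff_forall_integral_tendsto.2 fun h =>
        hweak h h.continuous ⟨‖h‖, h.norm_coe_le_norm⟩
  have hpt : ∀ s, liminf (fun p : ℕ × S => f p.1 p.2) (atTop ×ˢ 𝓝 s) ≤
      ((liminf (fun p : ℕ × S => H p.1 p.2) (atTop ×ˢ 𝓝 s) : ℝ≥0∞) : EReal) + g s := fun s => by
    simpa only [H, coe_add_eposPart_sub, hfg] using
      hgusc.liminf_coe_add_le (fun p : ℕ × S => H p.1 p.2) s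
  have hgn : ∀ᶠ n in atTop, eintegral (μs n) (fun s => (g s : EReal)) ≠ ⊥ :=
    (hlim.eventually_const_lt hbound).mono fun n hn => hn.ne'
  calc _ ≤ _ := eintegral_mono hpt
    _ ≤ _ := eintegral_coe_ennreal_add_le (measurable_liminf_prod_nhds H) hgusc.measurable
        (lintegral_ofReal_neg_ne_top_of_eintegral_ne_bot hbound.ne')
    _ ≤ ((liminf (fun n => ∫⁻ s, H n s ∂(μs n)) atTop : ℝ≥0∞) : EReal) +
          eintegral μ (fun s => (g s : EReal)) := by
        gcongr
        exact EReal.coe_ennreal_le_coe_ennreal_iff.2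
          (FiniteMeasure.lintegral_liminf_le_liminf_lintegral hμ H)
    _ ≤ _ := EReal.coe_liminf_add_le_liminf hlim <| hgn.mono fun n hn =>
        coe_lintegral_eposPart_sub_add_eintegral_le hgusc.measurable
          (lintegral_ofReal_neg_ne_top_of_eintegral_ne_bot hn) (hfg n)

/-- Fatou's lemma for weakly converging probability measures with a single
bounded-above upper semicontinuous minorant `g` satisfying
`−∞ < ∫ g dμ = lim_n ∫ g dμ_n`. -/
theorem fatou_weak_convergence_usc_minorant
    {S : Type*} [MetricSpace S] [MeasurableSpace S] [BorelSpace S]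
    (μs : ℕ → Measure S) (μ : Measure S)
    [∀ n, IsProbabilityMeasure (μs n)] [IsProbabilityMeasure μ]
    (hweak : ∀ h : S → ℝ, Continuous h → (∃ C : ℝ, ∀ s, |h s| ≤ C) →
      Tendsto (fun n => ∫ s, h s ∂(μs n)) atTop (𝓝 (∫ s, h s ∂μ)))
    (f : ℕ → S → EReal) (hf : ∀ n, Measurable (f n))
    (g : S → ℝ) (hgusc : UpperSemicontinuous g) (K : ℝ) (hK : ∀ s, g s ≤ K)
    (hfg : ∀ n s, (g s : EReal) ≤ f n s)
    (hdf : ∀ n, EIntegralDefined (μs n) (f n))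
    (hdliminf : EIntegralDefined μ
      (fun s => liminf (fun p : ℕ × S => f p.1 p.2) (atTop ×ˢ 𝓝 s)))
    (hbound : ⊥ < eintegral μ (fun s => (g s : EReal)))
    (hlim : Tendsto (fun n => eintegral (μs n) (fun s => (g s : EReal))) atTop
      (𝓝 (eintegral μ (fun s => (g s : EReal))))) :
    eintegral μ (fun s => liminf (fun p : ℕ × S => f p.1 p.2) (atTop ×ˢ 𝓝 s)) ≤
      liminf (fun n => eintegral (μs n) (f n)) atTop :=
  fatou_weak_convergence_usc_minorant_general μs μ hweak f g hgusc hfg hbound hlim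
end
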